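/- Let J ≥ 1, h > 0, η₀ > 0, L ≥ 0, and let a_1,…,a_J ∈ ℝ satisfy a_i ≥ η₀ for all i and |a_i − a_{i−1}| ≤ L h for 2 ≤ i ≤ J. Let Δ = diag(a_1,…,a_J) and let A₀ be the J×J tridiagonal matrix with stencil (−1, 2, −1). Then for every x ∈ ℝ^J: ⟨Δ A₀² x, x⟩ ≥ (η₀/2) ‖A₀ x‖₂² − (2 L² h² / η₀) ‖x‖₂². In particular ⟨Δ A₀² x, x⟩ ≥ −(2 L² h² / η₀) ‖x‖₂², so the quadratic form of the fourth-order correction term (1/(12h²)) Δ B₀, with B₀ the pentadiagonal matrix with stencil (1,−4,6,−4,1), is bounded below by −c ‖x‖₂² for a constant c depending only on η₀ and L (using B₀ = A₀² + E with E positive semidefinite). -/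

import Mathlib

/-! With `y = A₀ x` and `Δ = diag a`, symmetry of `A₀` gives
`⟨Δ A₀² x, x⟩ = ⟨Δ y, y⟩ + ⟨[A₀, Δ] x, y⟩`, and the first term is at least `η₀ ‖y‖²`.
The commutator has entries `(a_i - a_k) (A₀)_{ki}`, so it is supported on the edges of the path
graph, whose degrees are at most `2`, with entries of size at most `L h`; Young's inequality then
bounds the second term by `(η₀/2) ‖y‖² + (2 L² h² / η₀) ‖x‖²`.
Finally `B₀ = A₀² + diag(1, 0, …, 0, 1)`, so `Δ B₀` only adds a nonnegative diagonal form. -/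

/-- The `J×J` tridiagonal matrix with stencil `(−1, 2, −1)`. -/
def A0 (J : ℕ) : Matrix (Fin J) (Fin J) ℝ :=
  Matrix.of fun i j =>
    if i = j then 2
    else if (i : ℕ) + 1 = (j : ℕ) ∨ (j : ℕ) + 1 = (i : ℕ) then -1
    else 0

/-- The `J×J` pentadiagonal matrix with stencil `(1, −4, 6, −4, 1)`. -/
def B0 (J : ℕ) : Matrix (Fin J) (Fin J) ℝ :=
  Matrix.of fun i j =>
    if i = j then 6
    else if (i : ℕ) + 1 = (j : ℕ) ∨ (j : ℕ) + 1 = (i : ℕ) then -4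
    else if (i : ℕ) + 2 = (j : ℕ) ∨ (j : ℕ) + 2 = (i : ℕ) then 1
    else 0

open Matrix Finset SimpleGraph

lemma mul_abs_mul_abs_le_add_sq {ε : ℝ} (hε : 0 < ε) (δ u v : ℝ) :
    δ * (|u| * |v|) ≤ ε * u ^ 2 + δ ^ 2 / (4 * ε) * v ^ 2 := by
  rw [← sq_abs u, ← sq_abs v, div_mul_eq_mul_div, ← sub_nonneg]
  have key : 0 ≤ (2 * ε * |u| - δ * |v|) ^ 2 / (4 * ε) := by positivity
  convert key using 1
  field_simp
  ring

namespace SimpleGraph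

variable {ι : Type*} [Fintype ι] (G : SimpleGraph ι) [DecidableRel G.Adj]

lemma sum_sum_ite_adj_le {d : ℕ} (hd : ∀ k, G.degree k ≤ d) {f : ι → ℝ}
    (hf : ∀ k, 0 ≤ f k) :
    ∑ k, ∑ i, (if G.Adj k i then f k else 0) ≤ d * ∑ k, f k := by
  rw [Finset.mul_sum]
  refine sum_le_sum fun k _ => ?_
  rw [sum_ite, sum_const_zero, add_zero, sum_const, nsmul_eq_mul, ← neighborFinset_eq_filter,
    card_neighborFinset_eq_degree]
  exact mul_le_mul_of_nonneg_right (by exact_mod_cast hd k) (hf k)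

lemma sum_sum_ite_adj_le' {d : ℕ} (hd : ∀ k, G.degree k ≤ d) {f : ι → ℝ}
    (hf : ∀ i, 0 ≤ f i) :
    ∑ k, ∑ i, (if G.Adj k i then f i else 0) ≤ d * ∑ i, f i := by
  rw [sum_comm]
  simpa only [G.adj_comm] using G.sum_sum_ite_adj_le hd hf

lemma abs_dotProduct_mulVec_le_of_adj {d : ℕ} (hd : ∀ k, G.degree k ≤ d) {W : Matrix ι ι ℝ}
    {δ : ℝ} (hW : ∀ k i, |W k i| ≤ if G.Adj k i then δ else 0) {ε : ℝ} (hε : 0 < ε) (x y : ι → ℝ) :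
    |y ⬝ᵥ W *ᵥ x| ≤ d * (ε * ∑ k, y k ^ 2 + δ ^ 2 / (4 * ε) * ∑ i, x i ^ 2) := by
  have hterm : ∀ k i, |y k * (W k i * x i)| ≤
      (if G.Adj k i then ε * y k ^ 2 else 0) +
        (if G.Adj k i then δ ^ 2 / (4 * ε) * x i ^ 2 else 0) := by
    intro k i
    have hWki := hW k i
    rw [← ite_add_zero, abs_mul, abs_mul, mul_left_comm]
    split_ifs at hWki ⊢
    · exact (mul_le_mul_of_nonneg_right hWki (by positivity)).trans
        (mul_abs_mul_abs_le_add_sq hε _ _ _)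
    · simp [abs_nonpos_iff.mp hWki]
  calc |y ⬝ᵥ W *ᵥ x| = |∑ k, ∑ i, y k * (W k i * x i)| := by
        simp only [dotProduct, mulVec, Finset.mul_sum]
    _ ≤ ∑ k, ∑ i, |y k * (W k i * x i)| :=
        (abs_sum_le_sum_abs _ _).trans (sum_le_sum fun k _ => abs_sum_le_sum_abs _ _)
    _ ≤ ∑ k, ∑ i, (if G.Adj k i then ε * y k ^ 2 else 0)
          + ∑ k, ∑ i, (if G.Adj k i then δ ^ 2 / (4 * ε) * x i ^ 2 else 0) := by
        rw [← sum_add_distrib]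
        exact sum_le_sum fun k _ => (sum_le_sum fun i _ => hterm k i).trans_eq sum_add_distrib
    _ ≤ d * ∑ k, ε * y k ^ 2 + d * ∑ i, δ ^ 2 / (4 * ε) * x i ^ 2 :=
        add_le_add (G.sum_sum_ite_adj_le hd fun k => by positivity)
          (G.sum_sum_ite_adj_le' hd fun i => by positivity)
    _ = d * (ε * ∑ k, y k ^ 2 + δ ^ 2 / (4 * ε) * ∑ i, x i ^ 2) := by
        rw [← Finset.mul_sum, ← Finset.mul_sum]; ring

instance (n : ℕ) : DecidableRel (pathGraph n).Adj := fun _ _ => decidable_of_iff' _ pathGraph_adj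

lemma pathGraph_degree_le_two {n : ℕ} (k : Fin n) : (pathGraph n).degree k ≤ 2 := by
  have hsub : (pathGraph n).neighborFinset k ⊆
      ({i | (i : ℕ) = k + 1} : Finset (Fin n)) ∪ ({i | (i : ℕ) + 1 = k} : Finset (Fin n)) := by
    intro i
    simp [pathGraph_adj, eq_comm]
  have hle : ∀ s : Finset (Fin n), (∀ i ∈ s, ∀ j ∈ s, (i : ℕ) = j) → #s ≤ 1 :=
    fun s hs => card_le_one.mpr fun i hi j hj => Fin.ext (hs i hi j hj)
  rw [← card_neighborFinset_eq_degree]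
  refine (card_le_card hsub).trans <| (card_union_le _ _).trans <|
    (add_le_add ?_ ?_ : _ ≤ 1 + 1) <;>
    refine hle _ fun i hi j hj => ?_ <;> simp only [mem_filter_univ] at hi hj <;> omega

end SimpleGraph

section DiagonalWeight

variable {ι : Type*} [Fintype ι] [DecidableEq ι]

lemma mul_diagonal_sub_diagonal_mul_apply (A : Matrix ι ι ℝ) (a : ι → ℝ) (k i : ι) :
    (A * diagonal a - diagonal a * A) k i = (a i - a k) * A k i := by
  rw [Matrix.sub_apply, mul_diagonal, diagonal_mul]; ring

lemma diagonal_mul_sq_mulVec_dotProduct {A : Matrix ι ι ℝ} (hA : Aᵀ = A) (a x : ι → ℝ) :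
    (diagonal a * A ^ 2) *ᵥ x ⬝ᵥ x =
      diagonal a *ᵥ (A *ᵥ x) ⬝ᵥ A *ᵥ x + (A * diagonal a - diagonal a * A) *ᵥ x ⬝ᵥ A *ᵥ x := by
  rw [mulVec_mulVec, ← add_dotProduct, ← add_mulVec, add_sub_cancel, dotProduct_comm, sq,
    ← Matrix.mul_assoc, ← mulVec_mulVec, dotProduct_mulVec, ← mulVec_transpose, transpose_mul,
    hA, diagonal_transpose]

theorem diagonal_mul_sq_coercive (G : SimpleGraph ι) [DecidableRel G.Adj] {d : ℕ}
    (hd : ∀ k, G.degree k ≤ d) {A : Matrix ι ι ℝ} (hA : Aᵀ = A) {a : ι → ℝ} {η δ ε : ℝ}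
    (ha : ∀ i, η ≤ a i)
    (hcomm : ∀ k i, |(A * diagonal a - diagonal a * A) k i| ≤ if G.Adj k i then δ else 0)
    (hε : 0 < ε) (x : ι → ℝ) :
    (η - d * ε) * ∑ k, (A *ᵥ x) k ^ 2 - d * (δ ^ 2 / (4 * ε)) * ∑ i, x i ^ 2 ≤
      (diagonal a * A ^ 2) *ᵥ x ⬝ᵥ x := by
  have hdiag : η * ∑ k, (A *ᵥ x) k ^ 2 ≤ diagonal a *ᵥ (A *ᵥ x) ⬝ᵥ A *ᵥ x := by
    simp only [Finset.mul_sum, dotProduct, mulVec_diagonal, mul_assoc, ← sq]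
    exact sum_le_sum fun k _ => mul_le_mul_of_nonneg_right (ha k) (sq_nonneg _)
  have hbound := G.abs_dotProduct_mulVec_le_of_adj hd hcomm hε x (A *ᵥ x)
  rw [diagonal_mul_sq_mulVec_dotProduct hA,
    dotProduct_comm ((A * diagonal a - diagonal a * A) *ᵥ x)]
  linarith [neg_abs_le ((A *ᵥ x) ⬝ᵥ (A * diagonal a - diagonal a * A) *ᵥ x)]

end DiagonalWeight

lemma A0_transpose (J : ℕ) : (A0 J)ᵀ = A0 J := by
  ext i j
  simp only [transpose_apply, A0, of_apply, eq_comm, or_comm]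

lemma abs_commutator_A0_diagonal_le {J : ℕ} {a : Fin J → ℝ} {δ : ℝ}
    (ha : ∀ i j : Fin J, (i : ℕ) + 1 = j → |a j - a i| ≤ δ) (k i : Fin J) :
    |(A0 J * diagonal a - diagonal a * A0 J) k i| ≤ if (pathGraph J).Adj k i then δ else 0 := by
  rw [mul_diagonal_sub_diagonal_mul_apply]
  simp only [pathGraph_adj]
  by_cases hki : k = i
  · subst hki; simp
  simp only [A0, of_apply, if_neg hki]
  split_ifs with hadj
  · rw [abs_mul, abs_neg, abs_one, mul_one]
    rcases hadj with h | h
    · exact ha k i h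
    · exact abs_sub_comm (a i) (a k) ▸ ha i k h
  · simp

theorem diagonal_mul_A0_sq_coercive {J : ℕ} {η δ : ℝ} (hη : 0 < η) {a : Fin J → ℝ}
    (ha : ∀ i, η ≤ a i) (hLip : ∀ i j : Fin J, (i : ℕ) + 1 = j → |a j - a i| ≤ δ) (x : Fin J → ℝ) :
    η / 2 * ∑ k, (A0 J *ᵥ x) k ^ 2 - 2 * δ ^ 2 / η * ∑ i, x i ^ 2 ≤
      (diagonal a * A0 J ^ 2) *ᵥ x ⬝ᵥ x := by
  have h := diagonal_mul_sq_coercive (pathGraph J) pathGraph_degree_le_two (A0_transpose J) ha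
    (abs_commutator_A0_diagonal_le hLip) (by positivity : 0 < η / 4) x
  convert h using 3
  · push_cast; ring
  · field_simp; ring

lemma A0_mul_apply {J : ℕ} (M : Matrix (Fin J) (Fin J) ℝ) (i j : Fin J) :
    (A0 J * M) i j = 2 * M i j - (if h : (i : ℕ) + 1 < J then M ⟨i + 1, h⟩ j else 0)
      - (if h : 0 < (i : ℕ) then M ⟨i - 1, by omega⟩ j else 0) := by
  have hrow : ∀ k, A0 J i k * M k j = (if i = k then 2 * M k j else 0)
      - (if (k : ℕ) = i + 1 then M k j else 0) - (if (k : ℕ) + 1 = i then M k j else 0) := by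
    intro k
    simp only [A0, of_apply]
    split_ifs <;> first | ring1 | (exfalso; simp only [Fin.ext_iff] at *; omega)
  have hnext : (∑ k : Fin J, if (k : ℕ) = i + 1 then M k j else 0) =
      if h : (i : ℕ) + 1 < J then M ⟨i + 1, h⟩ j else 0 := by
    split_ifs with h
    · rw [sum_eq_single_of_mem ⟨_, h⟩ (mem_univ _), if_pos rfl]
      exact fun k _ hk => if_neg fun e => hk (Fin.ext e)
    · exact sum_eq_zero fun k _ => if_neg (by omega)
  have hprev : (∑ k : Fin J, if (k : ℕ) + 1 = i then M k j else 0) =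
      if h : 0 < (i : ℕ) then M ⟨i - 1, by omega⟩ j else 0 := by
    split_ifs with h
    · rw [sum_eq_single_of_mem ⟨i - 1, by omega⟩ (mem_univ _), if_pos (by simp only; omega)]
      exact fun k _ hk => if_neg fun e => hk (Fin.ext (by simp only; omega))
    · exact sum_eq_zero fun k _ => if_neg (by omega)
  rw [mul_apply, sum_congr rfl fun k _ => hrow k, sum_sub_distrib, sum_sub_distrib, hnext, hprev]
  simp only [sum_ite_eq, mem_univ, if_true]

lemma B0_eq_A0_sq_add_diagonal (J : ℕ) :
    B0 J = A0 J ^ 2 + diagonal fun i : Fin J =>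
      (if (i : ℕ) = 0 then 1 else 0) + (if (i : ℕ) + 1 = J then 1 else 0) := by
  ext i j
  rw [Matrix.add_apply, sq, A0_mul_apply, diagonal_apply]
  simp only [A0, B0, of_apply, Fin.ext_iff]
  split_ifs <;> first | omega | norm_num

lemma diagonal_mul_A0_sq_le_diagonal_mul_B0 {J : ℕ} {a : Fin J → ℝ} (ha : ∀ i, 0 ≤ a i)
    (x : Fin J → ℝ) :
    (diagonal a * A0 J ^ 2) *ᵥ x ⬝ᵥ x ≤ (diagonal a * B0 J) *ᵥ x ⬝ᵥ x := by
  rw [B0_eq_A0_sq_add_diagonal, Matrix.mul_add, add_mulVec, add_dotProduct,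
    le_add_iff_nonneg_right, diagonal_mul_diagonal, dotProduct_comm]
  refine (posSemidef_diagonal_iff.mpr fun i => ?_).dotProduct_mulVec_nonneg x
  have := ha i
  positivity

theorem fourth_order_correction_coercivity_general
    (η₀ L : ℝ) (hη : 0 < η₀) :
    ∃ c : ℝ, 0 ≤ c ∧
      ∀ (J : ℕ), 1 ≤ J → ∀ (h : ℝ), 0 < h →
      ∀ a : Fin J → ℝ,
        (∀ i, η₀ ≤ a i) →
        (∀ i j : Fin J, (i : ℕ) + 1 = (j : ℕ) → |a j - a i| ≤ L * h) →
      ∀ x : Fin J → ℝ,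
        ((η₀ / 2) * ∑ i, ((A0 J).mulVec x i)^2
            - (2 * L^2 * h^2 / η₀) * ∑ i, (x i)^2
          ≤ ∑ i, (Matrix.diagonal a * (A0 J)^2).mulVec x i * x i) ∧
        (-(2 * L^2 * h^2 / η₀) * ∑ i, (x i)^2
          ≤ ∑ i, (Matrix.diagonal a * (A0 J)^2).mulVec x i * x i) ∧
        (-c * ∑ i, (x i)^2
          ≤ ∑ i, ((1/(12*h^2)) • (Matrix.diagonal a * B0 J)).mulVec x i * x i) := by
  refine ⟨L ^ 2 / (6 * η₀), by positivity, fun J _ h hh a ha hLip x => ?_⟩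
  have hcoer : η₀ / 2 * ∑ k, (A0 J *ᵥ x) k ^ 2 - 2 * L ^ 2 * h ^ 2 / η₀ * ∑ i, x i ^ 2 ≤
      (diagonal a * A0 J ^ 2) *ᵥ x ⬝ᵥ x := by
    simpa only [mul_pow, mul_assoc] using diagonal_mul_A0_sq_coercive hη ha hLip x
  have hlower : -(2 * L ^ 2 * h ^ 2 / η₀) * ∑ i, x i ^ 2 ≤ (diagonal a * A0 J ^ 2) *ᵥ x ⬝ᵥ x := by
    linarith [mul_nonneg (half_pos hη).le (sum_nonneg fun k (_ : k ∈ univ) =>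
      sq_nonneg ((A0 J *ᵥ x) k))]
  have hB0 :=
    hlower.trans (diagonal_mul_A0_sq_le_diagonal_mul_B0 (fun i => hη.le.trans (ha i)) x)
  refine ⟨hcoer, hlower, ?_⟩
  change _ ≤ ((1 / (12 * h ^ 2)) • (diagonal a * B0 J)) *ᵥ x ⬝ᵥ x
  rw [smul_mulVec, smul_dotProduct, smul_eq_mul]
  have hscale : -(L ^ 2 / (6 * η₀)) = 1 / (12 * h ^ 2) * -(2 * L ^ 2 * h ^ 2 / η₀) := by
    field_simp; ring
  rw [hscale, mul_assoc]
  exact mul_le_mul_of_nonneg_left hB0 (by positivity)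

/-- Coercivity of the fourth-order correction term: for
`Δ = diag(a)` with `a ≥ η₀` and `|a_i − a_{i−1}| ≤ Lh`,
`⟨ΔA₀²x, x⟩ ≥ (η₀/2)‖A₀x‖₂² − (2L²h²/η₀)‖x‖₂² ≥ −(2L²h²/η₀)‖x‖₂²`,
and there is `c ≥ 0` depending only on `η₀, L` with
`⟨(1/(12h²))ΔB₀ x, x⟩ ≥ −c‖x‖₂²`. -/
theorem fourth_order_correction_coercivity
    (η₀ L : ℝ) (hη : 0 < η₀) (hL : 0 ≤ L) :
    ∃ c : ℝ, 0 ≤ c ∧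
      ∀ (J : ℕ), 1 ≤ J → ∀ (h : ℝ), 0 < h →
      ∀ a : Fin J → ℝ,
        (∀ i, η₀ ≤ a i) →
        (∀ i j : Fin J, (i : ℕ) + 1 = (j : ℕ) → |a j - a i| ≤ L * h) →
      ∀ x : Fin J → ℝ,
        ((η₀ / 2) * ∑ i, ((A0 J).mulVec x i)^2
            - (2 * L^2 * h^2 / η₀) * ∑ i, (x i)^2
          ≤ ∑ i, (Matrix.diagonal a * (A0 J)^2).mulVec x i * x i) ∧
        (-(2 * L^2 * h^2 / η₀) * ∑ i, (x i)^2
          ≤ ∑ i, (Matrix.diagonal a * (A0 J)^2).mulVec x i * x i) ∧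
        (-c * ∑ i, (x i)^2
          ≤ ∑ i, ((1/(12*h^2)) • (Matrix.diagonal a * B0 J)).mulVec x i * x i) :=
  fourth_order_correction_coercivity_general η₀ L hη
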